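/- arXiv:2312.01337 — 7 statements merged into one kernel-verified Lean document; each statement's English description precedes it below -/
import Mathlib

section
/- A map R: V → G is a relative Rota-Baxter operator of weight 0 if and only if its graph {(u, R(u)) : u ∈ V} is a subgroup of the semidirect product V ⋊_Φ G. -/
/-!
Multiplying two points of the graph, `(u, R u) (v, R v) = (u + Φ(R u) v, R u R v)`, shows that the
graph is closed under multiplication exactly when `R` satisfies the Rota-Baxter identity. A graph
closed under multiplication is automatically a subgroup: its point `e` over `0` satisfies `e e = e`,
since a point of the graph is determined by its first coordinate, so `e = 1`; and the point of the
graph over the first coordinate of `p⁻¹` multiplies `p` to a point over `0`, hence is `p⁻¹`.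
-/

namespace SemidirectProduct

variable {N G : Type*} [Group N] [Group G]

def graph (φ : G →* MulAut N) (f : N → G) : Set (N ⋊[φ] G) := {p | p.right = f p.left}

variable {φ : G →* MulAut N} {f : N → G}

theorem mem_graph {p : N ⋊[φ] G} : p ∈ graph φ f ↔ p.right = f p.left := Iff.rfl

theorem mk_mem_graph (n : N) : (⟨n, f n⟩ : N ⋊[φ] G) ∈ graph φ f := rfl

theorem eq_of_mem_graph {p q : N ⋊[φ] G} (hp : p ∈ graph φ f) (hq : q ∈ graph φ f)
    (h : p.left = q.left) : p = q :=
  SemidirectProduct.ext h (by rw [hp, hq, h])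

theorem mul_mem_graph_iff_forall :
    (∀ p ∈ graph φ f, ∀ q ∈ graph φ f, p * q ∈ graph φ f) ↔
      ∀ n m : N, f n * f m = f (n * φ (f n) m) := by
  constructor
  · intro h n m
    exact h _ (mk_mem_graph n) _ (mk_mem_graph m)
  · rintro h p hp q hq
    rw [mem_graph, mul_right, mul_left, hp, hq, h]

section MulClosed

variable (hf : ∀ p ∈ graph φ f, ∀ q ∈ graph φ f, p * q ∈ graph φ f)
include hf

theorem one_mem_graph_of_mul_mem : (1 : N ⋊[φ] G) ∈ graph φ f := by
  set e : N ⋊[φ] G := ⟨1, f 1⟩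
  have he : e ∈ graph φ f := mk_mem_graph 1
  have hee : e * e = e :=
    eq_of_mem_graph (hf e he e he) he (by simp [e, mul_left])
  rwa [← mul_eq_left.mp hee]

theorem inv_mem_graph_of_mul_mem {p : N ⋊[φ] G} (hp : p ∈ graph φ f) : p⁻¹ ∈ graph φ f := by
  set q : N ⋊[φ] G := ⟨p⁻¹.left, f p⁻¹.left⟩
  have hq : q ∈ graph φ f := mk_mem_graph _
  have hpq : p * q = 1 :=
    eq_of_mem_graph (hf p hp q hq) (one_mem_graph_of_mul_mem hf)
      (by rw [mul_left, ← mul_inv_cancel p, mul_left])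
  rwa [inv_eq_of_mul_eq_one_right hpq]

def graphSubgroup : Subgroup (N ⋊[φ] G) where
  carrier := graph φ f
  mul_mem' := fun ha hb => hf _ ha _ hb
  one_mem' := one_mem_graph_of_mul_mem hf
  inv_mem' := inv_mem_graph_of_mul_mem hf

end MulClosed

end SemidirectProduct

open SemidirectProduct

/-- The semidirect product `V ⋊[Φ] G` is realized via `Multiplicative V`, where the
`G`-action `Φ'` on `Multiplicative V` corresponds to `Φ : G →* AddAut V`. -/
theorem rrb_iff_graph_subgroup {G V : Type*} [Group G] [AddCommGroup V]
    (Φ : G →* Multiplicative (AddAut V)) (R : V → G)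
    (Φ' : G →* MulAut (Multiplicative V))
    (hΦ' : ∀ (g : G) (v : V), Φ' g (Multiplicative.ofAdd v) = Multiplicative.ofAdd (Multiplicative.toAdd (Φ g) v)) :
    (∀ u v : V, R u * R v = R (u + Multiplicative.toAdd (Φ (R u)) v)) ↔
    ∃ H : Subgroup (SemidirectProduct (Multiplicative V) G Φ'),
      ∀ p, p ∈ H ↔ p.right = R (Multiplicative.toAdd p.left) := by
  have hRB : (∀ u v : V, R u * R v = R (u + Multiplicative.toAdd (Φ (R u)) v)) ↔
      ∀ p ∈ graph Φ' (R ∘ Multiplicative.toAdd), ∀ q ∈ graph Φ' (R ∘ Multiplicative.toAdd),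
        p * q ∈ graph Φ' (R ∘ Multiplicative.toAdd) := by
    have hact (g : G) (m : Multiplicative V) : Φ' g m = .ofAdd (Multiplicative.toAdd (Φ g) m.toAdd) :=
      hΦ' g m.toAdd
    rw [mul_mem_graph_iff_forall]
    exact ⟨fun h n m => by simpa [hact] using h n.toAdd m.toAdd,
      fun h u v => by simpa [hact] using h (.ofAdd u) (.ofAdd v)⟩
  rw [hRB]
  constructor
  · intro hclosed
    exact ⟨graphSubgroup hclosed, fun p => Iff.rfl⟩
  · rintro ⟨H, hH⟩ p hp q hq
    exact (hH _).mp (H.mul_mem ((hH p).mpr hp) ((hH q).mpr hq))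
end

section
/- If R: V → G is a relative Rota-Baxter operator of weight 0, then defining u ▷ v = Φ(R(u))v makes (V, +, ▷) a pre-group, i.e., x ▷ (y+z) = (x ▷ y) + (x ▷ z) and x ▷ (y ▷ z) = (x + x ▷ y) ▷ z for all x,y,z ∈ V. -/
theorem rrb_pre_group {G V : Type*} [Group G] [AddCommGroup V]
    (Φ : G →* Multiplicative (AddAut V)) (R : V → G)
    (hR : ∀ u v : V, R u * R v = R (u + (Φ (R u)).toAdd v)) :
    (∀ x y z : V, (Φ (R x)).toAdd (y + z) = (Φ (R x)).toAdd y + (Φ (R x)).toAdd z) ∧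
    (∀ x y z : V, (Φ (R x)).toAdd ((Φ (R y)).toAdd z) = (Φ (R (x + (Φ (R x)).toAdd y))).toAdd z) := by
  refine ⟨fun x y z => map_add _ y z, fun x y z => ?_⟩
  rw [← hR, map_mul, toAdd_mul, AddAut.add_apply]
end

section
/- If R: V → G is a relative Rota-Baxter operator of weight 0, then V with the multiplication u * v = u + Φ(R(u))v is a group with identity 0, where the inverse of u is u† = −Φ(R(u)⁻¹)u. -/
/-! The Rota–Baxter identity `R u * R v = R (u ⋆ v)` says that `R` is multiplicative for the
descendent product `u ⋆ v = u + Φ(R u) v`. Associativity then reduces to `Φ` being a homomorphism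
into `Aut V`, `R 0 = 1` follows from `R 0 * R 0 = R 0`, and from `u ⋆ u† = 0` one gets
`R u * R u† = 1`, i.e. `R u† = (R u)⁻¹`, which makes `u†` a left inverse as well. -/

namespace RelativeRotaBaxter

variable {G V : Type*} [Group G] [AddCommGroup V] (Φ : G →* Multiplicative (AddAut V))

theorem toAdd_map_mul_apply (g h : G) (v : V) :
    (Φ (g * h)).toAdd v = (Φ g).toAdd ((Φ h).toAdd v) := by
  rw [Φ.map_mul]
  rfl

theorem toAdd_map_apply_toAdd_map_inv_apply (g : G) (v : V) :
    (Φ g).toAdd ((Φ g⁻¹).toAdd v) = v := by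
  rw [← toAdd_map_mul_apply, mul_inv_cancel, map_one]
  rfl

variable (R : V → G)

def descMul (u v : V) : V := u + (Φ (R u)).toAdd v

def descInv (u : V) : V := -((Φ ((R u)⁻¹)).toAdd u)

theorem descMul_zero (u : V) : descMul Φ R u 0 = u := by
  simp [descMul]

theorem descMul_descInv (u : V) : descMul Φ R u (descInv Φ R u) = 0 := by
  rw [descMul, descInv, map_neg, toAdd_map_apply_toAdd_map_inv_apply, add_neg_cancel]

variable {Φ R} (hR : ∀ u v : V, R u * R v = R (descMul Φ R u v))
include hR

theorem descMul_assoc (u v w : V) :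
    descMul Φ R (descMul Φ R u v) w = descMul Φ R u (descMul Φ R v w) := by
  rw [descMul, ← hR u v, toAdd_map_mul_apply, descMul, descMul, descMul, map_add, add_assoc]

theorem apply_zero_eq_one : R 0 = 1 := by
  have h := hR 0 0
  rwa [descMul_zero, mul_eq_left] at h

theorem zero_descMul (u : V) : descMul Φ R 0 u = u := by
  simp [descMul, apply_zero_eq_one hR]

theorem apply_descInv (u : V) : R (descInv Φ R u) = (R u)⁻¹ := by
  refine eq_inv_of_mul_eq_one_right ?_
  rw [hR, descMul_descInv, apply_zero_eq_one hR]

theorem descInv_descMul (u : V) : descMul Φ R (descInv Φ R u) u = 0 := by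
  rw [descMul, apply_descInv hR, descInv, neg_add_cancel]

end RelativeRotaBaxter

open RelativeRotaBaxter in
theorem rrb_descendent_group {G V : Type*} [Group G] [AddCommGroup V]
    (Φ : G →* Multiplicative (AddAut V)) (R : V → G)
    (hR : ∀ u v : V, R u * R v = R (u + (Φ (R u)).toAdd v)) :
    (∀ u v w : V, (u + (Φ (R u)).toAdd v) + (Φ (R (u + (Φ (R u)).toAdd v))).toAdd w
        = u + (Φ (R u)).toAdd (v + (Φ (R v)).toAdd w)) ∧
    (∀ u : V, (0 : V) + (Φ (R 0)).toAdd u = u) ∧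
    (∀ u : V, u + (Φ (R u)).toAdd (0 : V) = u) ∧
    (∀ u : V, u + (Φ (R u)).toAdd (-((Φ ((R u)⁻¹)).toAdd u)) = 0) ∧
    (∀ u : V, -((Φ ((R u)⁻¹)).toAdd u) + (Φ (R (-((Φ ((R u)⁻¹)).toAdd u)))).toAdd u = 0) :=
  ⟨descMul_assoc hR, zero_descMul hR, descMul_zero Φ R, descMul_descInv Φ R, descInv_descMul hR⟩
end

section
/- If R: V → G is a relative Rota-Baxter operator of weight 0 and (V,*) its descendent group, then the map L: (V,*) → Aut(V,+) given by L(u)v = Φ(R(u))v is a group action, and in particular L(u)⁻¹ = L(u†) where u† = −Φ(R(u)⁻¹)u is the *-inverse of u. -/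
/-- The multiplicative group structure that `AddAut A` carried in the older Mathlib
(`g * h = h.trans g`, `1 = refl`, `g⁻¹ = g.symm`); Mathlib now makes `AddAut A` an additive group. -/
instance AddAut.instGroupOld (A : Type*) [Add A] : Group (AddAut A) where
  mul g h := AddEquiv.trans h g
  one := AddEquiv.refl _
  inv := AddEquiv.symm
  mul_assoc _ _ _ := rfl
  one_mul _ := rfl
  mul_one _ := rfl
  inv_mul_cancel := AddEquiv.self_trans_symm

/-! The Rota-Baxter identity says that `R` turns the descendent product `u * v = u + Φ (R u) v`
into the product of `G`, so `Φ ∘ R` is an action of `(V, *)`; in particular `R` sends the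
descendent inverse `-(Φ (R u)⁻¹ u)` to `(R u)⁻¹`. -/

namespace RelativeRotaBaxter

variable {G V : Type*} [Group G] [AddCommGroup V] {Φ : G →* AddAut V} {R : V → G}

theorem map_zero_eq_one (hR : ∀ u v : V, R u * R v = R (u + Φ (R u) v)) : R 0 = 1 := by
  have h := hR 0 0
  rwa [map_zero, add_zero, mul_eq_left] at h

theorem add_apply_neg_apply_inv (g : G) (u : V) : u + Φ g (-(Φ g⁻¹ u)) = 0 := by
  rw [map_neg, map_inv, add_neg_eq_zero]
  exact ((Φ g).apply_symm_apply u).symm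

theorem map_neg_apply_inv_self (hR : ∀ u v : V, R u * R v = R (u + Φ (R u) v)) (u : V) :
    R (-(Φ (R u)⁻¹ u)) = (R u)⁻¹ := by
  apply eq_inv_of_mul_eq_one_right
  rw [hR, add_apply_neg_apply_inv, map_zero_eq_one hR]

end RelativeRotaBaxter

open RelativeRotaBaxter in
theorem rrb_left_mult_action {G V : Type*} [Group G] [AddCommGroup V]
    (Φ : G →* AddAut V) (R : V → G)
    (hR : ∀ u v : V, R u * R v = R (u + Φ (R u) v)) :
    (∀ w : V, Φ (R 0) w = w) ∧
    (∀ u v w : V, Φ (R (u + Φ (R u) v)) w = Φ (R u) (Φ (R v) w)) ∧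
    (∀ u : V, (Φ (R u))⁻¹ = Φ (R (-(Φ ((R u)⁻¹) u)))) := by
  refine ⟨fun w => ?_, fun u v w => ?_, fun u => ?_⟩
  · rw [map_zero_eq_one hR, map_one]
    rfl
  · rw [← hR, map_mul]
    rfl
  · rw [map_neg_apply_inv_self hR, map_inv]
end

section
/- If π: G → V is a bijective 1-cocycle (π(xy) = π(x) + Φ(x)π(y)) with coefficients in a G-module (V,Φ), then π⁻¹: V → G is a relative Rota-Baxter operator of weight 0, i.e., π⁻¹(u)π⁻¹(v) = π⁻¹(u + Φ(π⁻¹(u))v) for all u,v ∈ V. -/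
theorem cocycle_inverse_rrb {G V : Type*} [Group G] [AddCommGroup V]
    (Φ : G →* Multiplicative (AddAut V)) (π : G → V) (σ : V → G)
    (hleft : Function.LeftInverse σ π) (hright : Function.RightInverse σ π)
    (hcocycle : ∀ x y : G, π (x * y) = π x + Multiplicative.toAdd (Φ x) (π y)) :
    ∀ u v : V, σ u * σ v = σ (u + Multiplicative.toAdd (Φ (σ u)) v) := by
  intro u v
  apply hleft.injective
  simp only [hcocycle, hright _]
end

section
/- If R: V → G is a relative Rota-Baxter operator of weight 0, then the map Υ(u,v) = (Φ(R(u))v, Φ(R(Φ(R(u))v)⁻¹)u) satisfies the braid relation Υ₁Υ₂Υ₁ = Υ₂Υ₁Υ₂ on V×V×V, where Υ₁ = Υ×id and Υ₂ = id×Υ. -/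
/-!
Write `g • x` for `(Φ g).toAdd x`. The Rota–Baxter identity says exactly that `Υ` preserves the
product `R u * R v` of its two arguments: if `Υ (u, v) = (x, y)` then
`R x * R y = R (x + R x • y) = R (x + u) = R (u + R u • v) = R u * R v`.
With this, each side of the braid relation is computed in closed form; both send `(u, v, w)` to
`(a, b, (R a * R b)⁻¹ • u)` where `a = (R u * R v) • w` and `b = ((R a)⁻¹ * R u) • v`.
-/

/-- The Yang-Baxter map associated to a relative Rota-Baxter operator of weight 0. -/
def rrbYB {G V : Type*} [Group G] [AddCommGroup V] (Φ : G →* Multiplicative (AddAut V)) (R : V → G) :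
    V × V → V × V :=
  fun p => ((Φ (R p.1)).toAdd p.2, (Φ ((R ((Φ (R p.1)).toAdd p.2))⁻¹)).toAdd p.1)

/-- `Υ × id` acting on the first two components of `V × V × V`. -/
def rrbYB₁ {G V : Type*} [Group G] [AddCommGroup V] (Φ : G →* Multiplicative (AddAut V)) (R : V → G) :
    V × V × V → V × V × V :=
  fun p => ((rrbYB Φ R (p.1, p.2.1)).1, (rrbYB Φ R (p.1, p.2.1)).2, p.2.2)

/-- `id × Υ` acting on the last two components of `V × V × V`. -/
def rrbYB₂ {G V : Type*} [Group G] [AddCommGroup V] (Φ : G →* Multiplicative (AddAut V)) (R : V → G) :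
    V × V × V → V × V × V :=
  fun p => (p.1, rrbYB Φ R p.2)

theorem toAdd_map_mul_apply {M V : Type*} [MulOneClass M] [Add V]
    (Φ : M →* Multiplicative (AddAut V)) (g h : M) (x : V) :
    (Φ (g * h)).toAdd x = (Φ g).toAdd ((Φ h).toAdd x) := by
  rw [map_mul]; rfl

theorem toAdd_map_apply_map_inv_apply {G V : Type*} [Group G] [Add V]
    (Φ : G →* Multiplicative (AddAut V)) (g : G) (x : V) :
    (Φ g).toAdd ((Φ g⁻¹).toAdd x) = x := by
  rw [map_inv]; exact (Φ g).apply_symm_apply x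

section

variable {G V : Type*} [Group G] [AddCommGroup V] (Φ : G →* Multiplicative (AddAut V)) (R : V → G)

def IsRelativeRotaBaxter : Prop :=
  ∀ u v : V, R u * R v = R (u + (Φ (R u)).toAdd v)

variable {Φ R}

theorem IsRelativeRotaBaxter.mul_rrbYB (hR : IsRelativeRotaBaxter Φ R) (u v : V) :
    R (rrbYB Φ R (u, v)).1 * R (rrbYB Φ R (u, v)).2 = R u * R v := by
  rw [rrbYB, hR, toAdd_map_apply_map_inv_apply, add_comm, ← hR]

variable (Φ R) in
def rrbYBBraid (p : V × V × V) : V × V × V :=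
  let a := (Φ (R p.1 * R p.2.1)).toAdd p.2.2
  let b := (Φ ((R a)⁻¹ * R p.1)).toAdd p.2.1
  (a, b, (Φ ((R a * R b)⁻¹)).toAdd p.1)

theorem IsRelativeRotaBaxter.rrbYB₁_rrbYB₂_rrbYB₁ (hR : IsRelativeRotaBaxter Φ R) (u v w : V) :
    rrbYB₁ Φ R (rrbYB₂ Φ R (rrbYB₁ Φ R (u, v, w))) = rrbYBBraid Φ R (u, v, w) := by
  set v₁ := (rrbYB Φ R (u, v)).1
  set u₁ := (rrbYB Φ R (u, v)).2
  set w₁ := (rrbYB Φ R (u₁, w)).1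
  set a := (rrbYB Φ R (v₁, w₁)).1
  set b := (rrbYB Φ R (v₁, w₁)).2
  have ha : a = (Φ (R u * R v)).toAdd w := by
    rw [← hR.mul_rrbYB, toAdd_map_mul_apply]; rfl
  have hb : b = (Φ ((R a)⁻¹ * R u)).toAdd v := by
    rw [toAdd_map_mul_apply]; rfl
  have hc : (rrbYB Φ R (u₁, w)).2 = (Φ ((R a * R b)⁻¹)).toAdd u := by
    rw [hR.mul_rrbYB, mul_inv_rev, toAdd_map_mul_apply]; rfl
  show (a, b, (rrbYB Φ R (u₁, w)).2) = _
  rw [hc, hb, ha]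
  rfl

theorem IsRelativeRotaBaxter.rrbYB₂_rrbYB₁_rrbYB₂ (hR : IsRelativeRotaBaxter Φ R) (u v w : V) :
    rrbYB₂ Φ R (rrbYB₁ Φ R (rrbYB₂ Φ R (u, v, w))) = rrbYBBraid Φ R (u, v, w) := by
  set w₁ := (rrbYB Φ R (v, w)).1
  set v₁ := (rrbYB Φ R (v, w)).2
  set a := (rrbYB Φ R (u, w₁)).1
  set u₁ := (rrbYB Φ R (u, w₁)).2
  set b := (rrbYB Φ R (u₁, v₁)).1
  have ha : a = (Φ (R u * R v)).toAdd w := by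
    rw [toAdd_map_mul_apply]; rfl
  have hRu₁ : R u₁ * (R w₁)⁻¹ = (R a)⁻¹ * R u := by
    rw [eq_inv_mul_iff_mul_eq, ← mul_assoc, mul_inv_eq_iff_eq_mul, hR.mul_rrbYB]
  have hb : b = (Φ ((R a)⁻¹ * R u)).toAdd v := by
    rw [← hRu₁, toAdd_map_mul_apply]; rfl
  have hc : (rrbYB Φ R (u₁, v₁)).2 = (Φ ((R a * R b)⁻¹)).toAdd u := by
    rw [mul_inv_rev, toAdd_map_mul_apply]; rfl
  show (a, b, (rrbYB Φ R (u₁, v₁)).2) = _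
  rw [hc, hb, ha]
  rfl

end

theorem rrb_solution_braid {G V : Type*} [Group G] [AddCommGroup V]
    (Φ : G →* Multiplicative (AddAut V)) (R : V → G)
    (hR : ∀ u v : V, R u * R v = R (u + (Φ (R u)).toAdd v)) :
    rrbYB₁ Φ R ∘ rrbYB₂ Φ R ∘ rrbYB₁ Φ R = rrbYB₂ Φ R ∘ rrbYB₁ Φ R ∘ rrbYB₂ Φ R := by
  have hR : IsRelativeRotaBaxter Φ R := hR
  funext ⟨u, v, w⟩
  exact (hR.rrbYB₁_rrbYB₂_rrbYB₁ u v w).trans (hR.rrbYB₂_rrbYB₁_rrbYB₂ u v w).symm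
end

section
/- A linear map B: g → g on a Lie algebra g over a field satisfying the Rota-Baxter identity [B(x),B(y)] = B([B(x),y] + [x,B(y)]) induces a pre-Lie algebra structure on g via x ▷ y = [B(x), y], i.e., the product ▷ satisfies (x▷y)▷z − x▷(y▷z) = (y▷x)▷z − y▷(x▷z) for all x,y,z ∈ g. -/
theorem rb_pre_lie {K L : Type*} [Field K] [LieRing L] [LieAlgebra K L]
    (B : L →ₗ[K] L)
    (hB : ∀ x y : L, ⁅B x, B y⁆ = B (⁅B x, y⁆ + ⁅x, B y⁆)) :
    ∀ x y z : L,
      ⁅B ⁅B x, y⁆, z⁆ - ⁅B x, ⁅B y, z⁆⁆ = ⁅B ⁅B y, x⁆, z⁆ - ⁅B y, ⁅B x, z⁆⁆ := by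
  intro x y z
  have h : B ⁅B x, y⁆ - B ⁅B y, x⁆ = ⁅B x, B y⁆ := by
    rw [hB x y, map_add, ← lie_skew (B y) x, map_neg, sub_neg_eq_add]
  rw [sub_eq_sub_iff_sub_eq_sub, ← sub_lie, h, lie_lie]
end
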